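/- arXiv:2508.00707 — 2 statements merged into one kernel-verified Lean document; each statement's English description precedes it below -/
import Mathlib

section
/- Let 𝒫_p(P̂, ε) = {P ∈ Δ_N : ‖P − P̂‖_p ≤ ε} denote an L_p ball of distributions. Then for any 1 ≤ p ≤ ∞, nominal distributions P̂ ∈ Δ_M, Q̂ ∈ Δ_N, and radii ε_1, ε_2 ≥ 0, the product set satisfies 𝒫_p(P̂, ε_1) ⊗ 𝒫_p(Q̂, ε_2) ⊆ 𝒫_p(P̂ ⊗ Q̂, ε_1 + ε_2). -/
open scoped ENNReal

/-- The `L_p` norm of a vector, for `p ∈ [1, ∞]` (extended real exponent). -/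
noncomputable def lpNorm {ι : Type*} [Fintype ι] (p : ℝ≥0∞) (f : ι → ℝ) : ℝ :=
  if p = ∞ then ⨆ i, |f i| else (∑ i, |f i| ^ p.toReal) ^ (1 / p.toReal)

/-- The probability simplex on a finite index type. -/
def simplex (ι : Type*) [Fintype ι] : Set (ι → ℝ) :=
  {P | (∀ i, 0 ≤ P i) ∧ ∑ i, P i = 1}

/-- An `L_p` ball of probability distributions around a nominal distribution. -/
noncomputable def lpBall {ι : Type*} [Fintype ι] (p : ℝ≥0∞) (Phat : ι → ℝ)
    (eps : ℝ) : Set (ι → ℝ) :=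
  {P ∈ simplex ι | lpNorm p (P - Phat) ≤ eps}

/-!
Write `P ⊗ Q - P̂ ⊗ Q̂ = P ⊗ (Q - Q̂) + (P - P̂) ⊗ Q̂`. The `L_p` norm is multiplicative on outer
products, and for `p ≥ 1` a probability vector has `L_p` norm at most its `L_1` norm, namely `1`.
The triangle inequality therefore bounds the distance by `‖Q - Q̂‖_p + ‖P - P̂‖_p ≤ ε₂ + ε₁`.
-/

section LpNorm

variable {ι κ : Type*} [Fintype ι] [Fintype κ] {p : ℝ≥0∞}

lemma lpNorm_eq_norm_toLp (hp : p ≠ 0) (f : ι → ℝ) : lpNorm p f = ‖WithLp.toLp p f‖ :=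
  (if_neg hp).symm

lemma lpNorm_nonneg (p : ℝ≥0∞) (f : ι → ℝ) : 0 ≤ lpNorm p f := by
  unfold lpNorm
  split_ifs
  · exact Real.iSup_nonneg fun i => abs_nonneg (f i)
  · positivity

lemma lpNorm_add_le (hp : 1 ≤ p) (f g : ι → ℝ) :
    lpNorm p (f + g) ≤ lpNorm p f + lpNorm p g := by
  have : Fact (1 ≤ p) := ⟨hp⟩
  simp only [lpNorm_eq_norm_toLp (zero_lt_one.trans_le hp).ne', WithLp.toLp_add]
  exact norm_add_le _ _

lemma lpNorm_outer (p : ℝ≥0∞) (f : ι → ℝ) (g : κ → ℝ) :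
    lpNorm p (fun ij : ι × κ => f ij.1 * g ij.2) = lpNorm p f * lpNorm p g := by
  unfold lpNorm
  split_ifs
  · simp only [abs_mul]
    rw [Finite.ciSup_prod, Real.iSup_mul_of_nonneg (Real.iSup_nonneg fun j => abs_nonneg (g j))]
    simp only [Real.mul_iSup_of_nonneg (abs_nonneg _)]
  · simp only [abs_mul, Real.mul_rpow (abs_nonneg _) (abs_nonneg _), Fintype.sum_prod_type,
      ← Finset.sum_mul_sum]
    exact Real.mul_rpow (by positivity) (by positivity)

lemma lpNorm_outer_sub_outer_le (hp : 1 ≤ p) (P Phat : ι → ℝ) (Q Qhat : κ → ℝ) :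
    lpNorm p ((fun ij : ι × κ => P ij.1 * Q ij.2) - fun ij => Phat ij.1 * Qhat ij.2) ≤
      lpNorm p P * lpNorm p (Q - Qhat) + lpNorm p (P - Phat) * lpNorm p Qhat := by
  have hsplit : ((fun ij : ι × κ => P ij.1 * Q ij.2) - fun ij => Phat ij.1 * Qhat ij.2) =
      (fun ij => P ij.1 * (Q - Qhat) ij.2) + fun ij => (P - Phat) ij.1 * Qhat ij.2 := by
    funext ij
    simp only [Pi.sub_apply, Pi.add_apply]
    ring
  rw [hsplit, ← lpNorm_outer, ← lpNorm_outer]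
  exact lpNorm_add_le hp _ _

lemma lpNorm_le_one_of_mem_simplex (hp : 1 ≤ p) {w : ι → ℝ} (hw : w ∈ simplex ι) :
    lpNorm p w ≤ 1 := by
  obtain ⟨hw_nonneg, hw_sum⟩ := hw
  have hw_le_one (i : ι) : w i ≤ 1 :=
    hw_sum ▸ Finset.single_le_sum (fun j _ => hw_nonneg j) (Finset.mem_univ i)
  unfold lpNorm
  split_ifs with hp_top
  · exact Real.iSup_le (fun i => (abs_of_nonneg (hw_nonneg i)).trans_le (hw_le_one i)) zero_le_one
  · have hr : 1 ≤ p.toReal := by simpa using ENNReal.toReal_mono hp_top hp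
    refine Real.rpow_le_one (by positivity) ?_ (by positivity)
    calc ∑ i, |w i| ^ p.toReal ≤ ∑ i, w i := Finset.sum_le_sum fun i _ => by
          rw [abs_of_nonneg (hw_nonneg i)]
          exact Real.rpow_le_self_of_le_one (hw_nonneg i) (hw_le_one i) hr
      _ = 1 := hw_sum

end LpNorm

lemma outer_mem_simplex {ι κ : Type*} [Fintype ι] [Fintype κ] {P : ι → ℝ} {Q : κ → ℝ}
    (hP : P ∈ simplex ι) (hQ : Q ∈ simplex κ) :
    (fun ij : ι × κ => P ij.1 * Q ij.2) ∈ simplex (ι × κ) :=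
  ⟨fun ij => mul_nonneg (hP.1 _) (hQ.1 _), by
    rw [Fintype.sum_prod_type, ← Finset.sum_mul_sum, hP.2, hQ.2, one_mul]⟩

theorem lp_ball_kronecker_subset_general {M N : ℕ} (p : ℝ≥0∞) (hp : 1 ≤ p)
    (Phat : Fin M → ℝ) (Qhat : Fin N → ℝ)
    (hQhat : Qhat ∈ simplex (Fin N))
    (eps1 eps2 : ℝ)
    (P : Fin M → ℝ) (Q : Fin N → ℝ)
    (hP : P ∈ lpBall p Phat eps1) (hQ : Q ∈ lpBall p Qhat eps2) :
    (fun ij : Fin M × Fin N => P ij.1 * Q ij.2) ∈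
      lpBall p (fun ij : Fin M × Fin N => Phat ij.1 * Qhat ij.2) (eps1 + eps2) := by
  obtain ⟨hP_simplex, hP_dist⟩ := hP
  obtain ⟨hQ_simplex, hQ_dist⟩ := hQ
  refine ⟨outer_mem_simplex hP_simplex hQ_simplex, ?_⟩
  calc _ ≤ lpNorm p P * lpNorm p (Q - Qhat) + lpNorm p (P - Phat) * lpNorm p Qhat :=
        lpNorm_outer_sub_outer_le hp P Phat Q Qhat
    _ ≤ eps2 + eps1 := add_le_add
        ((mul_le_of_le_one_left (lpNorm_nonneg _ _)
          (lpNorm_le_one_of_mem_simplex hp hP_simplex)).trans hQ_dist)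
        ((mul_le_of_le_one_right (lpNorm_nonneg _ _)
          (lpNorm_le_one_of_mem_simplex hp hQhat)).trans hP_dist)
    _ = eps1 + eps2 := add_comm _ _

/-- Theorem 2: the outer product of two `L_p` balls of distributions is
contained in the `L_p` ball around the product nominal, with radius the sum
of the radii. -/
theorem lp_ball_kronecker_subset {M N : ℕ} (p : ℝ≥0∞) (hp : 1 ≤ p)
    (Phat : Fin M → ℝ) (Qhat : Fin N → ℝ)
    (hPhat : Phat ∈ simplex (Fin M)) (hQhat : Qhat ∈ simplex (Fin N))
    (eps1 eps2 : ℝ) (heps1 : 0 ≤ eps1) (heps2 : 0 ≤ eps2)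
    (P : Fin M → ℝ) (Q : Fin N → ℝ)
    (hP : P ∈ lpBall p Phat eps1) (hQ : Q ∈ lpBall p Qhat eps2) :
    (fun ij : Fin M × Fin N => P ij.1 * Q ij.2) ∈
      lpBall p (fun ij : Fin M × Fin N => Phat ij.1 * Qhat ij.2) (eps1 + eps2) :=
  lp_ball_kronecker_subset_general p hp Phat Qhat hQhat eps1 eps2 P Q hP hQ
end

section
/- The McCormick envelope exactly characterizes the convex hull of the bilinear graph: the set {(p, q, pq) : p ∈ [p̲, p̄], q ∈ [q̲, q̄]} has convex hull equal to the set of (p, q, h) with p ∈ [p̲, p̄], q ∈ [q̲, q̄] satisfying h ≥ pq̲ + qp̲ − p̲q̲, h ≥ pq̄ + qp̄ − p̄q̄, h ≤ pq̲ + qp̄ − p̄q̲, and h ≤ pq̄ + qp̲ − p̲q̄. -/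
/-!
The graph lies in the envelope because each envelope inequality is the nonnegativity of one of the
products `(p - pl) (q - ql)`, `(pu - p) (qu - q)`, `(p - pl) (qu - q)`, `(pu - p) (q - ql)`,
and the envelope is convex, being cut out by affine inequalities.

Conversely, a point `(p, q, h)` of the envelope of a nondegenerate box is a convex combination of
the four corners of the graph: take the bilinear interpolation weights of `(p, q)` and move them
along the twist `(1, -1, -1, 1)` by `(h - p q) / ((pu - pl) (qu - ql))`. The twist does not change
the first two coordinates and raises the third by exactly `h - p q`, and the nonnegativity of the
four resulting weights is precisely the four envelope inequalities. If the box is degenerate, the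
envelope inequalities already force `h = p q`.
-/

section

variable (pl pu ql qu : ℝ)

def bilinearGraph : Set (ℝ × ℝ × ℝ) :=
  {x | ∃ p q, pl ≤ p ∧ p ≤ pu ∧ ql ≤ q ∧ q ≤ qu ∧ x = (p, q, p * q)}

def mccormickEnvelope : Set (ℝ × ℝ × ℝ) :=
  {x | pl ≤ x.1 ∧ x.1 ≤ pu ∧ ql ≤ x.2.1 ∧ x.2.1 ≤ qu ∧
    x.2.2 ≥ x.1 * ql + x.2.1 * pl - pl * ql ∧
    x.2.2 ≥ x.1 * qu + x.2.1 * pu - pu * qu ∧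
    x.2.2 ≤ x.1 * ql + x.2.1 * pu - pu * ql ∧
    x.2.2 ≤ x.1 * qu + x.2.1 * pl - pl * qu}

theorem bilinearGraph_subset_mccormickEnvelope :
    bilinearGraph pl pu ql qu ⊆ mccormickEnvelope pl pu ql qu := by
  rintro _ ⟨p, q, hp₁, hp₂, hq₁, hq₂, rfl⟩
  refine ⟨hp₁, hp₂, hq₁, hq₂, ?_, ?_, ?_, ?_⟩ <;> dsimp only
  · nlinarith [mul_nonneg (sub_nonneg.2 hp₁) (sub_nonneg.2 hq₁)]
  · nlinarith [mul_nonneg (sub_nonneg.2 hp₂) (sub_nonneg.2 hq₂)]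
  · nlinarith [mul_nonneg (sub_nonneg.2 hp₂) (sub_nonneg.2 hq₁)]
  · nlinarith [mul_nonneg (sub_nonneg.2 hp₁) (sub_nonneg.2 hq₂)]

theorem convex_mccormickEnvelope : Convex ℝ (mccormickEnvelope pl pu ql qu) := by
  rintro ⟨p, q, h⟩ hx ⟨p', q', h'⟩ hy a b ha hb hab
  obtain rfl : b = 1 - a := by linarith
  obtain ⟨hx₁, hx₂, hx₃, hx₄, hx₅, hx₆, hx₇, hx₈⟩ := hx
  obtain ⟨hy₁, hy₂, hy₃, hy₄, hy₅, hy₆, hy₇, hy₈⟩ := hy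
  simp only [Prod.smul_mk, Prod.mk_add_mk, smul_eq_mul] at *
  refine ⟨?_, ?_, ?_, ?_, ?_, ?_, ?_, ?_⟩ <;> nlinarith

theorem mccormickEnvelope_subset_bilinearGraph_of_degenerate (hdeg : pl = pu ∨ ql = qu) :
    mccormickEnvelope pl pu ql qu ⊆ bilinearGraph pl pu ql qu := by
  rintro ⟨p, q, h⟩ ⟨hp₁, hp₂, hq₁, hq₂, hlo, -, hup, -⟩
  refine ⟨p, q, hp₁, hp₂, hq₁, hq₂, ?_⟩
  dsimp only at *
  rcases hdeg with rfl | rfl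
  · obtain rfl := le_antisymm hp₂ hp₁
    congr; linarith
  · obtain rfl := le_antisymm hq₂ hq₁
    congr; linarith

theorem mccormickEnvelope_subset_convexHull_bilinearGraph (hp : pl < pu) (hq : ql < qu) :
    mccormickEnvelope pl pu ql qu ⊆ convexHull ℝ (bilinearGraph pl pu ql qu) := by
  rintro ⟨p, q, h⟩ ⟨hp₁, hp₂, hq₁, hq₂, hlo₁, hlo₂, hup₁, hup₂⟩
  dsimp only at *
  have hD : 0 < (pu - pl) * (qu - ql) := mul_pos (sub_pos.2 hp) (sub_pos.2 hq)
  set D := (pu - pl) * (qu - ql)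
  set δ := h - p * q
  let w : Fin 4 → ℝ := ![((pu - p) * (qu - q) + δ) / D, ((pu - p) * (q - ql) - δ) / D,
    ((p - pl) * (qu - q) - δ) / D, ((p - pl) * (q - ql) + δ) / D]
  let z : Fin 4 → ℝ × ℝ × ℝ :=
    ![(pl, ql, pl * ql), (pl, qu, pl * qu), (pu, ql, pu * ql), (pu, qu, pu * qu)]
  have hz : ∀ i, z i ∈ bilinearGraph pl pu ql qu := by
    intro i
    fin_cases i
    exacts [⟨pl, ql, le_rfl, hp.le, le_rfl, hq.le, rfl⟩, ⟨pl, qu, le_rfl, hp.le, hq.le, le_rfl, rfl⟩,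
      ⟨pu, ql, hp.le, le_rfl, le_rfl, hq.le, rfl⟩, ⟨pu, qu, hp.le, le_rfl, hq.le, le_rfl, rfl⟩]
  have hw : ∀ i, 0 ≤ w i := by
    intro i
    fin_cases i <;> exact div_nonneg (by simp only [δ]; linarith) hD.le
  have hw_sum : ∑ i, w i = 1 := by
    simp only [w, Fin.sum_univ_four, Matrix.cons_val_zero, Matrix.cons_val_one, Matrix.cons_val]
    field_simp
    ring
  have hwz : ∑ i, w i • z i = (p, q, h) := by
    simp only [w, z, Fin.sum_univ_four, Matrix.cons_val_zero, Matrix.cons_val_one, Matrix.cons_val,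
      Prod.smul_mk, smul_eq_mul, Prod.mk_add_mk, Prod.mk.injEq]
    refine ⟨?_, ?_, ?_⟩ <;> field_simp <;> ring
  rw [← hwz]
  exact (convex_convexHull ℝ _).sum_mem (fun i _ => hw i) hw_sum
    fun i _ => subset_convexHull ℝ _ (hz i)

end

/-- McCormick's theorem: the four envelope inequalities exactly characterise
the convex hull of the graph of the bilinear product over a box. -/
theorem mccormick_convexHull (pl pu ql qu : ℝ) (hpl : pl ≤ pu) (hql : ql ≤ qu) :
    convexHull ℝ
      {x : ℝ × ℝ × ℝ | ∃ p q, pl ≤ p ∧ p ≤ pu ∧ ql ≤ q ∧ q ≤ qu ∧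
        x = (p, q, p * q)} =
    {x : ℝ × ℝ × ℝ |
      pl ≤ x.1 ∧ x.1 ≤ pu ∧ ql ≤ x.2.1 ∧ x.2.1 ≤ qu ∧
      x.2.2 ≥ x.1 * ql + x.2.1 * pl - pl * ql ∧
      x.2.2 ≥ x.1 * qu + x.2.1 * pu - pu * qu ∧
      x.2.2 ≤ x.1 * ql + x.2.1 * pu - pu * ql ∧
      x.2.2 ≤ x.1 * qu + x.2.1 * pl - pl * qu} := by
  refine (convexHull_min (bilinearGraph_subset_mccormickEnvelope pl pu ql qu)
    (convex_mccormickEnvelope pl pu ql qu)).antisymm ?_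
  rcases hpl.lt_or_eq with hp | hp
  · rcases hql.lt_or_eq with hq | hq
    · exact mccormickEnvelope_subset_convexHull_bilinearGraph pl pu ql qu hp hq
    · exact (mccormickEnvelope_subset_bilinearGraph_of_degenerate pl pu ql qu (.inr hq)).trans
        (subset_convexHull ℝ _)
  · exact (mccormickEnvelope_subset_bilinearGraph_of_degenerate pl pu ql qu (.inl hp)).trans
      (subset_convexHull ℝ _)
end
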